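/- arXiv:1511.01379 — 5 statements merged into one kernel-verified Lean document; each statement's English description precedes it below -/
import Mathlib

section
/- Let b₁, b₂, …, b_q be nonnegative real numbers such that their sum is at most 1 and each bᵢ ≤ 1/2. Then the index set {1,…,q} can be partitioned into two sets J₁ and J₂ such that for each z ∈ {1,2}, the sum of bᵢ over i ∈ J_z is at most 2/3. -/
/-!
Take `J` of largest weight among the sets of weight at most `t`. If its complement weighed more
than `t`, then `J` would weigh less than `t / 2`. The complement contains some `i` with `b i > 0`;
by maximality `J ∪ {i}` is too heavy, so `b i > t - ∑ J`, while the singleton `{i}` is admissible,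
so `b i ≤ ∑ J`. Together `∑ J > t / 2`, a contradiction.
-/

open Finset

variable {ι K : Type*} [Fintype ι] [DecidableEq ι] [Field K] [LinearOrder K] [IsStrictOrderedRing K]

theorem sum_compl_le_of_isMax_sum_le {b : ι → K} {t : K} (ht : 0 ≤ t)
    (hsum : ∑ i, b i ≤ 3 / 2 * t) (hle : ∀ i, b i ≤ t) {J : Finset ι}
    (hmax : ∀ s : Finset ι, ∑ i ∈ s, b i ≤ t → ∑ i ∈ s, b i ≤ ∑ i ∈ J, b i) :
    ∑ i ∈ Jᶜ, b i ≤ t := by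
  by_contra! hcompl
  have hsplit := sum_add_sum_compl J b
  obtain ⟨i, hiJ, hi⟩ : ∃ i ∈ Jᶜ, (0 : K) < b i :=
    exists_lt_of_sum_lt (by simpa using ht.trans_lt hcompl)
  rw [mem_compl] at hiJ
  have hinsert : t < b i + ∑ j ∈ J, b j := by
    by_contra! h
    have := hmax (insert i J) (by rwa [sum_insert hiJ])
    rw [sum_insert hiJ] at this
    linarith
  have hsingle : b i ≤ ∑ j ∈ J, b j := by simpa using hmax {i} (by simpa using hle i)
  linarith

theorem exists_sum_le_and_sum_compl_le {b : ι → K} {t : K} (ht : 0 ≤ t)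
    (hsum : ∑ i, b i ≤ 3 / 2 * t) (hle : ∀ i, b i ≤ t) :
    ∃ J : Finset ι, ∑ i ∈ J, b i ≤ t ∧ ∑ i ∈ Jᶜ, b i ≤ t := by
  obtain ⟨J, hJ, hmax⟩ := exists_max_image {s : Finset ι | ∑ i ∈ s, b i ≤ t}
    (fun s ↦ ∑ i ∈ s, b i) ⟨∅, by simpa using ht⟩
  rw [mem_filter_univ] at hJ
  exact ⟨J, hJ, sum_compl_le_of_isMax_sum_le ht hsum hle fun s hs ↦ hmax s (by simpa using hs)⟩

theorem stmt1_general (q : ℕ) (b : Fin q → ℝ)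
    (hsum : ∑ i, b i ≤ 1) (hhalf : ∀ i, b i ≤ 1 / 2) :
    ∃ J : Finset (Fin q), (∑ i ∈ J, b i ≤ 2 / 3) ∧ (∑ i ∈ Jᶜ, b i ≤ 2 / 3) :=
  exists_sum_le_and_sum_compl_le (by norm_num) (by linarith) fun i ↦ (hhalf i).trans (by norm_num)

/-- Nonnegative reals summing to at most 1, each at most 1/2, can be split into two
groups each summing to at most 2/3. -/
theorem stmt1 (q : ℕ) (b : Fin q → ℝ) (h0 : ∀ i, 0 ≤ b i)
    (hsum : ∑ i, b i ≤ 1) (hhalf : ∀ i, b i ≤ 1 / 2) :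
    ∃ J : Finset (Fin q), (∑ i ∈ J, b i ≤ 2 / 3) ∧ (∑ i ∈ Jᶜ, b i ≤ 2 / 3) :=
  stmt1_general q b hsum hhalf
end

section
/- If a graph G has tree-partition width at most k, then the treewidth of G satisfies 1 + tw(G) ≤ 2·k. -/
/-!
Root the tree `T` at a node `r` and let the new bag of a node `x` be the union of the parts of
`x` and of its parent. An edge of `G` joins two vertices of one part or of adjacent parts, and of
two adjacent nodes one is the parent of the other, so some new bag contains both ends. The new
bags containing a vertex `v` are those of the node of `v` and of its children: a star in `T`,
hence connected. Because `G` is finite, `T` is first cut down to a finite subtree holding every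
vertex, so that the new tree can be indexed by `Fin n`.
-/

open SimpleGraph

namespace SimpleGraph

variable {N : Type*} {T : SimpleGraph N}

namespace IsTree

variable (hT : T.IsTree) (r : N)

noncomputable def pathToRoot (x : N) : T.Walk x r :=
  (hT.existsUnique_path x r).choose

theorem isPath_pathToRoot (x : N) : (hT.pathToRoot r x).IsPath :=
  (hT.existsUnique_path x r).choose_spec.1

theorem eq_pathToRoot {x : N} {p : T.Walk x r} (hp : p.IsPath) : p = hT.pathToRoot r x :=
  (hT.existsUnique_path x r).choose_spec.2 p hp

noncomputable def parent (x : N) : N :=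
  (hT.pathToRoot r x).snd

@[simp]
theorem parent_root : hT.parent r r = r := by
  rw [parent, ← hT.eq_pathToRoot r Walk.IsPath.nil]
  rfl

theorem adj_parent {x : N} (hx : x ≠ r) : T.Adj x (hT.parent r x) :=
  Walk.adj_snd (Walk.not_nil_of_ne hx)

theorem parent_eq_or_parent_eq_of_adj {x y : N} (hxy : T.Adj x y) :
    hT.parent r x = y ∨ hT.parent r y = x := by
  by_cases hy : y ∈ (hT.pathToRoot r x).support
  · exact .inl (hT.isAcyclic.eq_snd_of_adj_start (hT.isPath_pathToRoot r x) hxy hy).symm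
  · right
    have hpath := (hT.isPath_pathToRoot r x).cons hy (h := hxy.symm)
    rw [parent, ← hT.eq_pathToRoot r hpath, Walk.snd_cons]

end IsTree

theorem connected_induce_of_forall_eq_or_adj {G : SimpleGraph N} {s : Set N} {c : N}
    (hc : c ∈ s) (h : ∀ x ∈ s, x = c ∨ G.Adj x c) : (G.induce s).Connected := by
  rw [connected_iff_exists_forall_reachable]
  refine ⟨⟨c, hc⟩, fun ⟨x, hx⟩ => ?_⟩
  rcases h x hx with rfl | hxc
  · rfl
  · exact (induce_adj.2 hxc).reachable.symm

end SimpleGraph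

section TreeDecompositions

variable {V N M : Type*}

structure IsTreePartition (G : SimpleGraph V) (T : SimpleGraph N) (B : N → Finset V) : Prop where
  isTree : T.IsTree
  existsUnique_mem : ∀ v, ∃! x, v ∈ B x
  exists_mem_mem_of_adj :
    ∀ u v, G.Adj u v → ∃ x y, u ∈ B x ∧ v ∈ B y ∧ (x = y ∨ T.Adj x y)

structure IsTreeDecomposition (G : SimpleGraph V) (T : SimpleGraph N) (B : N → Finset V) :
    Prop where
  isTree : T.IsTree
  exists_mem_mem_of_adj : ∀ u v, G.Adj u v → ∃ x, u ∈ B x ∧ v ∈ B x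
  connected_induce_mem : ∀ v, (T.induce {x | v ∈ B x}).Connected

namespace IsTreePartition

variable {G : SimpleGraph V} {T : SimpleGraph N} {B : N → Finset V}

theorem comap (h : IsTreePartition G T B) (e : M ≃ N) :
    IsTreePartition G (T.comap e) (B ∘ e) where
  isTree := (Iso.comap e T).isTree_iff.2 h.isTree
  existsUnique_mem v := by
    obtain ⟨x, hx, hxu⟩ := h.existsUnique_mem v
    exact ⟨e.symm x, by simpa using hx, fun y hy => e.eq_symm_apply.2 (hxu _ hy)⟩
  exists_mem_mem_of_adj u v huv := by
    obtain ⟨x, y, hx, hy, hxy⟩ := h.exists_mem_mem_of_adj u v huv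
    refine ⟨e.symm x, e.symm y, by simpa using hx, by simpa using hy, ?_⟩
    simpa using hxy

theorem induce (h : IsTreePartition G T B) {S : Set N} (hS : (T.induce S).Connected)
    (hmem : ∀ v, ∃ x ∈ S, v ∈ B x) : IsTreePartition G (T.induce S) (fun x => B x) where
  isTree := ⟨hS, h.isTree.isAcyclic.induce S⟩
  existsUnique_mem v := by
    obtain ⟨x, hxS, hx⟩ := hmem v
    exact ⟨⟨x, hxS⟩, hx, fun y hy => Subtype.ext ((h.existsUnique_mem v).unique hy hx)⟩
  exists_mem_mem_of_adj u v huv := by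
    obtain ⟨x, y, hx, hy, hxy⟩ := h.exists_mem_mem_of_adj u v huv
    obtain ⟨x', hx'S, hx'⟩ := hmem u
    obtain ⟨y', hy'S, hy'⟩ := hmem v
    obtain rfl := (h.existsUnique_mem u).unique hx hx'
    obtain rfl := (h.existsUnique_mem v).unique hy hy'
    exact ⟨⟨x, hx'S⟩, ⟨y, hy'S⟩, hx, hy, by simpa [Subtype.ext_iff] using hxy⟩

theorem exists_finset_induce [Finite V] (h : IsTreePartition G T B) :
    ∃ S : Finset N, IsTreePartition G (T.induce S) (fun x => B x) := by
  classical
  have := Fintype.ofFinite V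
  choose part hpart using fun v => (h.existsUnique_mem v).exists
  obtain ⟨x₀⟩ := h.isTree.connected.nonempty
  obtain ⟨S, hpartS, hS⟩ := T.extend_finset_to_connected h.isTree.connected.preconnected
    (Finset.insert_nonempty x₀ (Finset.univ.image part))
  exact ⟨S, h.induce hS fun v => ⟨part v, hpartS (by simp), hpart v⟩⟩

theorem isTreeDecomposition [DecidableEq V] (h : IsTreePartition G T B) (r : N) :
    IsTreeDecomposition G T (fun x => B x ∪ B (h.isTree.parent r x)) where
  isTree := h.isTree
  exists_mem_mem_of_adj u v huv := by
    obtain ⟨x, y, hx, hy, rfl | hxy⟩ := h.exists_mem_mem_of_adj u v huv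
    · exact ⟨x, Finset.mem_union_left _ hx, Finset.mem_union_left _ hy⟩
    rcases h.isTree.parent_eq_or_parent_eq_of_adj r hxy with rfl | rfl
    · exact ⟨x, Finset.mem_union_left _ hx, Finset.mem_union_right _ hy⟩
    · exact ⟨y, Finset.mem_union_right _ hx, Finset.mem_union_left _ hy⟩
  connected_induce_mem v := by
    obtain ⟨c, hc, hcu⟩ := h.existsUnique_mem v
    refine connected_induce_of_forall_eq_or_adj (Finset.mem_union_left _ hc) fun x hx => ?_
    rcases Finset.mem_union.1 hx with hx | hx
    · exact .inl (hcu x hx)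
    by_cases hxc : x = c
    · exact .inl hxc
    -- `x = r` would force `c = parent r = r = x`.
    have hxr : x ≠ r := by rintro rfl; simp_all
    exact .inr (hcu _ hx ▸ h.isTree.adj_parent r hxr)

end IsTreePartition

end TreeDecompositions

/-- If a graph admits a tree-partition decomposition of width at most `k`, then it admits a
tree decomposition of width at most `2k - 1`, i.e. `1 + tw(G) ≤ 2k`. -/
theorem stmt4 {V N : Type*} [Fintype V] [DecidableEq V]
    (G : SimpleGraph V)
    (T : SimpleGraph N) (B : N → Finset V) (k : ℕ)
    (htree : T.IsTree)
    (hpart : ∀ v : V, ∃! x : N, v ∈ B x)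
    (hedge : ∀ u v : V, G.Adj u v →
      ∃ x y : N, u ∈ B x ∧ v ∈ B y ∧ (x = y ∨ T.Adj x y))
    (hwidth : ∀ x : N, (B x).card ≤ k) :
    ∃ (N' : Type) (T' : SimpleGraph N') (B' : N' → Finset V),
      T'.IsTree ∧
      (∀ u v : V, G.Adj u v → ∃ x : N', u ∈ B' x ∧ v ∈ B' x) ∧
      (∀ v : V, (T'.induce {x : N' | v ∈ B' x}).Connected) ∧
      (∀ x : N', (B' x).card ≤ 2 * k) := by
  obtain ⟨S, hS⟩ := (IsTreePartition.mk htree hpart hedge).exists_finset_induce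
  have hP := hS.comap (Fintype.equivFin S).symm
  obtain ⟨r⟩ := hP.isTree.connected.nonempty
  obtain ⟨htree', hcover, hconn⟩ := hP.isTreeDecomposition r
  refine ⟨_, _, _, htree', hcover, hconn, fun x => ?_⟩
  calc _ ≤ k + k := (Finset.card_union_le _ _).trans (add_le_add (hwidth _) (hwidth _))
    _ = 2 * k := (two_mul k).symm
end

section
/- Let T be a tree whose vertex set is bipartitioned into sets A and B such that every vertex of B has degree exactly 2 in T and |A| = |B| + 1. Then for every vertex w ∈ A there exists a matching in T that matches every vertex of T except w. -/
/-!
Root the tree at `w` and send every other vertex to its parent, the neighbour one step closer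
to `w`. The parent of a vertex of `A` lies in `B`, and a vertex of `B` has degree 2, hence one
parent and exactly one child. So the parent map is a bijection from `A \ {w}` onto `B`, and the
edges joining each vertex of `A \ {w}` to its parent form the required matching.
-/

namespace SimpleGraph

variable {V : Type*} {G : SimpleGraph V} {r u v c : V}

lemma Walk.notMem_support_of_length_eq_dist_of_dist_lt {p : G.Walk r u}
    (hp : p.length = G.dist r u) (h : G.dist r u < G.dist r v) : v ∉ p.support := by
  classical
  intro hv
  exact ((dist_le (p.takeUntil v hv)).trans (p.length_takeUntil_le_length hv)).not_gt (hp ▸ h)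

lemma Connected.exists_adj_dist_add_one (hG : G.Connected) (hv : v ≠ r) :
    ∃ u, G.Adj v u ∧ G.dist r u + 1 = G.dist r v := by
  obtain ⟨p, hp⟩ := hG.exists_walk_length_eq_dist v r
  obtain ⟨u, hvu, q, rfl⟩ := Walk.exists_eq_cons_of_ne hv p
  have hclose : G.dist r u ≤ q.length := dist_comm (G := G) ▸ dist_le q
  have hfar : G.dist r v ≤ G.dist r u + G.dist u v := hG.dist_triangle
  rw [dist_eq_one_iff_adj.mpr hvu.symm] at hfar
  rw [Walk.length_cons, dist_comm] at hp
  exact ⟨u, hvu, by omega⟩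

lemma IsAcyclic.eq_of_adj_of_dist_add_one (hG : G.IsAcyclic) {u₁ u₂ : V}
    (h₁ : G.Adj v u₁) (hd₁ : G.dist r u₁ + 1 = G.dist r v)
    (h₂ : G.Adj v u₂) (hd₂ : G.dist r u₂ + 1 = G.dist r v) : u₁ = u₂ := by
  have hr : G.Reachable r v := Reachable.of_dist_ne_zero (by omega)
  -- each `uᵢ` is the penultimate vertex of a path from `r` to `v`, and that path is unique
  have hpenult : ∀ {u}, G.Adj v u → G.dist r u + 1 = G.dist r v →
      ∃ q : G.Walk r v, q.IsPath ∧ q.penultimate = u := fun {u} h hd => by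
    obtain ⟨p, hp, hlen⟩ := (hr.trans h.reachable).exists_path_of_dist
    exact ⟨p.concat h.symm,
      hp.concat (Walk.notMem_support_of_length_eq_dist_of_dist_lt hlen (by omega)) h.symm,
      Walk.penultimate_concat _ _⟩
  obtain ⟨q₁, hq₁, rfl⟩ := hpenult h₁ hd₁
  obtain ⟨q₂, hq₂, rfl⟩ := hpenult h₂ hd₂
  have : (⟨q₁, hq₁⟩ : G.Path r v) = ⟨q₂, hq₂⟩ := (hG.subsingleton_path r v).elim _ _
  rw [Subtype.mk.inj this]

lemma IsTree.dist_eq_add_one_of_adj_of_ne (hG : G.IsTree) (hu : G.Adj v u)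
    (hud : G.dist r u + 1 = G.dist r v) (hc : G.Adj v c) (hcu : c ≠ u) :
    G.dist r c = G.dist r v + 1 := by
  refine (hG.dist_eq_dist_add_one_of_adj r hc).resolve_left fun hcd => hcu ?_
  exact hG.isAcyclic.eq_of_adj_of_dist_add_one hc hcd.symm hu hud

lemma IsTree.existsUnique_adj_dist_eq_add_one_of_degree_eq_two (hG : G.IsTree)
    [Fintype (G.neighborSet v)] (hv : v ≠ r) (hdeg : G.degree v = 2) :
    ∃! c, G.Adj v c ∧ G.dist r c = G.dist r v + 1 := by
  classical
  obtain ⟨u, hu, hud⟩ := hG.connected.exists_adj_dist_add_one hv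
  obtain ⟨x, y, hxy, hnbr⟩ := Finset.card_eq_two.mp (G.card_neighborFinset_eq_degree v ▸ hdeg)
  have hmem : ∀ {z}, G.Adj v z → z = x ∨ z = y := fun {z} h => by
    simpa [hnbr] using (G.mem_neighborFinset v z).mpr h
  have hfar : ∀ {z}, G.Adj v z → z ≠ u → G.Adj v z ∧ G.dist r z = G.dist r v + 1 :=
    fun h hz => ⟨h, hG.dist_eq_add_one_of_adj_of_ne hu hud h hz⟩
  have hx : G.Adj v x := (G.mem_neighborFinset v x).mp (by simp [hnbr])
  have hy : G.Adj v y := (G.mem_neighborFinset v y).mp (by simp [hnbr])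
  rcases hmem hu with rfl | rfl
  · refine ⟨y, hfar hy hxy.symm, fun z ⟨hz, hzd⟩ => ?_⟩
    exact (hmem hz).resolve_left fun h => by subst h; omega
  · refine ⟨x, hfar hx hxy, fun z ⟨hz, hzd⟩ => ?_⟩
    exact (hmem hz).resolve_right fun h => by subst h; omega

lemma IsTree.bijOn_parent_of_degree_eq_two (hG : G.IsTree) [∀ v, Fintype (G.neighborSet v)]
    {par : V → V} (hpar : ∀ v, v ≠ r → G.Adj v (par v))
    (hpard : ∀ v, v ≠ r → G.dist r (par v) + 1 = G.dist r v)
    {t : Set V} (ht : ∀ b ∈ t, b ≠ r ∧ G.degree b = 2) :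
    Set.BijOn par {v | v ≠ r ∧ par v ∈ t} t := by
  refine ⟨fun v hv => hv.2, fun v₁ hv₁ v₂ hv₂ he => ?_, fun b hb => ?_⟩
  · obtain ⟨hbr, hdeg⟩ := ht _ hv₁.2
    refine (hG.existsUnique_adj_dist_eq_add_one_of_degree_eq_two hbr hdeg).unique
      ⟨(hpar v₁ hv₁.1).symm, (hpard v₁ hv₁.1).symm⟩ ?_
    rw [he]
    exact ⟨(hpar v₂ hv₂.1).symm, (hpard v₂ hv₂.1).symm⟩
  · obtain ⟨hbr, hdeg⟩ := ht b hb
    obtain ⟨c, ⟨hbc, hcd⟩, -⟩ := hG.existsUnique_adj_dist_eq_add_one_of_degree_eq_two hbr hdeg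
    have hcr : c ≠ r := by rintro rfl; simp at hcd
    have hpc : par c = b :=
      hG.isAcyclic.eq_of_adj_of_dist_add_one (hpar c hcr) (hpard c hcr) hbc.symm hcd.symm
    exact ⟨c, ⟨hcr, hpc ▸ hb⟩, hpc⟩

end SimpleGraph

open SimpleGraph in
theorem stmt7_general {V : Type*} [Fintype V] (T : SimpleGraph V) [DecidableRel T.Adj]
    (hT : T.IsTree) (A B : Set V)
    (hdisj : Disjoint A B) (hcover : A ∪ B = Set.univ)
    (hbip : ∀ u v : V, T.Adj u v → (u ∈ A ∧ v ∈ B) ∨ (u ∈ B ∧ v ∈ A))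
    (hdeg : ∀ v ∈ B, T.degree v = 2) :
    ∀ w ∈ A, ∃ M : T.Subgraph, M.IsMatching ∧ M.verts = {v : V | v ≠ w} := by
  intro w hw
  have hAB : ∀ {u v}, T.Adj u v → u ∈ A → v ∈ B := fun h hu =>
    ((hbip _ _ h).resolve_right fun h' => hdisj.ne_of_mem hu h'.1 rfl).2
  have hBA : ∀ {u v}, T.Adj u v → u ∈ B → v ∈ A := fun h hu =>
    ((hbip _ _ h).resolve_left fun h' => hdisj.ne_of_mem h'.1 hu rfl).2
  have hBw : ∀ {v}, v ∈ B → v ≠ w := fun hv h => hdisj.ne_of_mem hw hv h.symm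
  choose! par hpar hpard using fun v (hv : v ≠ w) => hT.connected.exists_adj_dist_add_one hv
  have hchildren : {v | v ≠ w ∧ par v ∈ B} = {a | a ∈ A ∧ a ≠ w} := by
    ext v
    exact ⟨fun h => ⟨hBA (hpar v h.1).symm h.2, h.1⟩, fun h => ⟨h.2, hAB (hpar v h.2) h.1⟩⟩
  have hbij := hchildren ▸
    hT.bijOn_parent_of_degree_eq_two hpar hpard fun b hb => ⟨hBw hb, hdeg b hb⟩
  obtain ⟨M, hverts, hM⟩ := Subgraph.IsMatching.exists_of_disjoint_sets_of_equiv
    (hdisj.mono_left fun _ h => h.1) (hbij.equiv par) fun a => hpar a a.2.2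
  refine ⟨M, hM, hverts.trans ?_⟩
  ext v
  have hv : v ∈ A ∨ v ∈ B := by simpa using hcover.ge (Set.mem_univ v)
  exact ⟨fun h => h.elim And.right hBw, fun h => hv.imp (⟨·, h⟩) id⟩

/-- In a tree bipartitioned into `A` and `B` where every vertex of `B` has degree exactly 2
and `|A| = |B| + 1`, for every `w ∈ A` there is a matching covering all vertices except `w`. -/
theorem stmt7 {V : Type*} [Fintype V] (T : SimpleGraph V) [DecidableRel T.Adj]
    (hT : T.IsTree) (A B : Set V)
    (hdisj : Disjoint A B) (hcover : A ∪ B = Set.univ)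
    (hbip : ∀ u v : V, T.Adj u v → (u ∈ A ∧ v ∈ B) ∨ (u ∈ B ∧ v ∈ A))
    (hdeg : ∀ v ∈ B, T.degree v = 2)
    (hcard : A.ncard = B.ncard + 1) :
    ∀ w ∈ A, ∃ M : T.Subgraph, M.IsMatching ∧ M.verts = {v : V | v ≠ w} :=
  stmt7_general T hT A B hdisj hcover hbip hdeg
end

section
/- Let A be an n×n skew-symmetric matrix over a field of characteristic zero, and let X, Y ⊆ {1,…,n} with |X| = |Y| = rank(A). Then det(A[X,X]) · det(A[Y,Y]) = (−1)^{|X|} · (det(A[X,Y]))², where A[S,T] denotes the submatrix with rows indexed by S and columns indexed by T. -/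
/-!
Factor `A = B * C` through `F ^ rank A`. Every `r × r` minor of `A` with `r = rank A` is then
`det B[X, -] * det C[-, Y]`, so `det A[X,X] * det A[Y,Y] = det A[X,Y] * det A[Y,X]`.
Skew-symmetry gives `A[Y,X] = -A[X,Y]ᵀ`, hence `det A[Y,X] = (-1)^r * det A[X,Y]`.
-/

open Matrix

namespace Matrix

variable {F : Type*} [Field F] {m n : Type*} [Fintype m] [Fintype n]

theorem exists_eq_mul_of_rank (A : Matrix m n F) :
    ∃ (B : Matrix m (Fin A.rank) F) (C : Matrix (Fin A.rank) n F), A = B * C := by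
  classical
  let W := LinearMap.range A.mulVecLin
  let b : Module.Basis (Fin A.rank) F W := Module.finBasisOfFinrankEq F W rfl
  refine ⟨LinearMap.toMatrix b (Pi.basisFun F m) W.subtype,
    LinearMap.toMatrix (Pi.basisFun F n) b A.mulVecLin.rangeRestrict, ?_⟩
  rw [← LinearMap.toMatrix_comp, LinearMap.subtype_comp_codRestrict, ← Matrix.toLin'_apply',
    ← Matrix.toLin_eq_toLin', LinearMap.toMatrix_toLin]

theorem det_submatrix_mul_det_submatrix_of_rank (A : Matrix m n F)
    (f f' : Fin A.rank → m) (g g' : Fin A.rank → n) :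
    (A.submatrix f g).det * (A.submatrix f' g').det =
      (A.submatrix f g').det * (A.submatrix f' g).det := by
  obtain ⟨B, C, hBC⟩ := exists_eq_mul_of_rank A
  simp only [hBC, submatrix_mul B C _ id _ Function.bijective_id, det_mul]
  ring

end Matrix

theorem Matrix.det_submatrix_swap_of_transpose_eq_neg {R : Type*} [CommRing R] {n : Type*}
    {A : Matrix n n R} (hA : Aᵀ = -A) {k : ℕ} (f g : Fin k → n) :
    (A.submatrix g f).det = (-1) ^ k * (A.submatrix f g).det := by
  have : A.submatrix g f = -(A.submatrix f g)ᵀ := by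
    ext i j
    simpa using congrFun (congrFun hA (f j)) (g i)
  rw [this, det_neg, det_transpose, Fintype.card_fin]

theorem stmt14_general {F : Type*} [Field F] {n : ℕ}
    (A : Matrix (Fin n) (Fin n) F) (hskew : A.transpose = -A)
    (X Y : Finset (Fin n)) (hX : X.card = A.rank) (hY : Y.card = A.rank) :
    (A.submatrix (X.orderEmbOfFin hX) (X.orderEmbOfFin hX)).det *
      (A.submatrix (Y.orderEmbOfFin hY) (Y.orderEmbOfFin hY)).det =
    (-1 : F) ^ X.card *
      ((A.submatrix (X.orderEmbOfFin hX) (Y.orderEmbOfFin hY)).det) ^ 2 := by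
  rw [det_submatrix_mul_det_submatrix_of_rank,
    det_submatrix_swap_of_transpose_eq_neg hskew (X.orderEmbOfFin hX) (Y.orderEmbOfFin hY), hX]
  ring

/-- Frobenius' theorem for skew-symmetric matrices: if `|X| = |Y| = rank A`, then
`det A[X,X] * det A[Y,Y] = (-1)^{|X|} * (det A[X,Y])^2`. -/
theorem stmt14 {F : Type*} [Field F] [CharZero F] {n : ℕ}
    (A : Matrix (Fin n) (Fin n) F) (hskew : A.transpose = -A)
    (X Y : Finset (Fin n)) (hX : X.card = A.rank) (hY : Y.card = A.rank) :
    (A.submatrix (X.orderEmbOfFin hX) (X.orderEmbOfFin hX)).det *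
      (A.submatrix (Y.orderEmbOfFin hY) (Y.orderEmbOfFin hY)).det =
    (-1 : F) ^ X.card *
      ((A.submatrix (X.orderEmbOfFin hX) (Y.orderEmbOfFin hY)).det) ^ 2 :=
  stmt14_general A hskew X Y hX hY
end

section
/- Let M be an n×m matrix over a field, let i₀ be a column index, j₀ a row index with M[j₀, i₀] ≠ 0, and define M' by the row operations M'[k, ℓ] = M[k, ℓ] − (M[k, i₀]/M[j₀, i₀])·M[j₀, ℓ] for all rows k ≠ j₀ and all columns ℓ, and M'[j₀, ℓ] = M[j₀, ℓ]. Suppose H is a graph on the rows and columns of M that is a completion of the bipartite graph of M (i.e., M[j,i] ≠ 0 implies row j is adjacent to column i in H), and suppose ⪯ is a strong H-ordering such that i₀ ⪯ ℓ for every column ℓ with M[j₀, ℓ] ≠ 0 and j₀ ⪯ k for every row k with M[k, i₀] ≠ 0. Then H is also a completion of the bipartite graph of M': whenever M'[k, ℓ] ≠ 0, row k is adjacent to column ℓ in H. -/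
theorem ne_zero_or_ne_zero_and_ne_zero_of_sub_mul_ne_zero {R : Type*} [NonUnitalNonAssocRing R]
    {a b c : R} (h : a - b * c ≠ 0) : a ≠ 0 ∨ b ≠ 0 ∧ c ≠ 0 := by
  by_cases ha : a = 0
  · rw [ha, zero_sub, neg_ne_zero] at h
    exact Or.inr ⟨left_ne_zero_of_mul h, right_ne_zero_of_mul h⟩
  · exact Or.inl ha

theorem ne_zero_or_fillIn_of_pivotStep_ne_zero {F : Type*} [DivisionRing F] {n m : ℕ}
    (M : Matrix (Fin n) (Fin m) F) (i₀ : Fin m) (j₀ k : Fin n) (ℓ : Fin m)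
    (h : (if k = j₀ then M k ℓ else M k ℓ - (M k i₀ / M j₀ i₀) * M j₀ ℓ) ≠ 0) :
    M k ℓ ≠ 0 ∨ M k i₀ ≠ 0 ∧ M j₀ ℓ ≠ 0 := by
  split_ifs at h with hk
  · exact Or.inl h
  · refine (ne_zero_or_ne_zero_and_ne_zero_of_sub_mul_ne_zero h).imp_right ?_
    exact fun ⟨hdiv, hjℓ⟩ => ⟨left_ne_zero_of_mul (by rwa [div_eq_mul_inv] at hdiv), hjℓ⟩

theorem stmt18_general {F : Type*} [Field F] {n m : ℕ}
    (M : Matrix (Fin n) (Fin m) F)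
    (H : SimpleGraph (Fin n ⊕ Fin m))
    (le : (Fin n ⊕ Fin m) → (Fin n ⊕ Fin m) → Prop)
    (hcompl : ∀ (j : Fin n) (i : Fin m), M j i ≠ 0 → H.Adj (Sum.inl j) (Sum.inr i))
    (hstrong : ∀ a b c : Fin n ⊕ Fin m, H.Adj a b → H.Adj a c → le b c →
      ∀ d : Fin n ⊕ Fin m, H.Adj b d → le a d → H.Adj c d)
    (i₀ : Fin m) (j₀ : Fin n) (hpiv : M j₀ i₀ ≠ 0)
    (hcolmin : ∀ ℓ : Fin m, M j₀ ℓ ≠ 0 → le (Sum.inr i₀) (Sum.inr ℓ))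
    (hrowmin : ∀ k : Fin n, M k i₀ ≠ 0 → le (Sum.inl j₀) (Sum.inl k))
    (M' : Matrix (Fin n) (Fin m) F)
    (hM' : ∀ (k : Fin n) (ℓ : Fin m),
      M' k ℓ = if k = j₀ then M k ℓ else M k ℓ - (M k i₀ / M j₀ i₀) * M j₀ ℓ) :
    ∀ (k : Fin n) (ℓ : Fin m), M' k ℓ ≠ 0 → H.Adj (Sum.inl k) (Sum.inr ℓ) := by
  intro k ℓ hne
  rw [hM'] at hne
  rcases ne_zero_or_fillIn_of_pivotStep_ne_zero M i₀ j₀ k ℓ hne with hkℓ | ⟨hki₀, hj₀ℓ⟩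
  · exact hcompl k ℓ hkℓ
  -- Strong ordering at the column `i₀`, whose neighbours include `j₀ ⪯ k`, applied to `ℓ ∼ j₀`.
  · exact hstrong (Sum.inr i₀) (Sum.inl j₀) (Sum.inl k)
      (hcompl j₀ i₀ hpiv).symm (hcompl k i₀ hki₀).symm (hrowmin k hki₀)
      (Sum.inr ℓ) (hcompl j₀ ℓ hj₀ℓ) (hcolmin ℓ hj₀ℓ)

/-- Fill-in invariant of one step of Gaussian elimination guided by a strong ordering:
if `H` (a graph on rows ⊕ columns) is a completion of the bipartite graph of `M`, the
ordering `le` is a strong `H`-ordering, the pivot column `i₀` is earliest among the nonzero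
columns of the pivot row `j₀` and the pivot row is earliest among rows with a nonzero entry
in column `i₀`, then after eliminating column `i₀` with row `j₀` the graph `H` is still a
completion of the bipartite graph of the resulting matrix `M'`. -/
theorem stmt18 {F : Type*} [Field F] {n m : ℕ}
    (M : Matrix (Fin n) (Fin m) F)
    (H : SimpleGraph (Fin n ⊕ Fin m))
    (le : (Fin n ⊕ Fin m) → (Fin n ⊕ Fin m) → Prop)
    (hlin : IsLinearOrder (Fin n ⊕ Fin m) le)
    (hcompl : ∀ (j : Fin n) (i : Fin m), M j i ≠ 0 → H.Adj (Sum.inl j) (Sum.inr i))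
    (hstrong : ∀ a b c : Fin n ⊕ Fin m, H.Adj a b → H.Adj a c → le b c →
      ∀ d : Fin n ⊕ Fin m, H.Adj b d → le a d → H.Adj c d)
    (i₀ : Fin m) (j₀ : Fin n) (hpiv : M j₀ i₀ ≠ 0)
    (hcolmin : ∀ ℓ : Fin m, M j₀ ℓ ≠ 0 → le (Sum.inr i₀) (Sum.inr ℓ))
    (hrowmin : ∀ k : Fin n, M k i₀ ≠ 0 → le (Sum.inl j₀) (Sum.inl k))
    (M' : Matrix (Fin n) (Fin m) F)
    (hM' : ∀ (k : Fin n) (ℓ : Fin m),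
      M' k ℓ = if k = j₀ then M k ℓ else M k ℓ - (M k i₀ / M j₀ i₀) * M j₀ ℓ) :
    ∀ (k : Fin n) (ℓ : Fin m), M' k ℓ ≠ 0 → H.Adj (Sum.inl k) (Sum.inr ℓ) :=
  stmt18_general M H le hcompl hstrong i₀ j₀ hpiv hcolmin hrowmin M' hM'
end
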